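/- An LFSA S with |Q| states is K-step opaque with respect to Q_S if and only if it is min{K, 2^{|Q|} − 2}-step opaque with respect to Q_S. In particular, K-step opacity for any K > 2^{|Q|} − 2 is equivalent to (2^{|Q|} − 2)-step opacity. -/

import Mathlib

/-- A labeled finite-state automaton (LFSA): transition relation `δ`,
initial states `Q0`, labeling `lab` (where `none` stands for ε, i.e. unobservable). -/
structure LFSA (Q : Type*) (E : Type*) (A : Type*) where
  δ : Q → E → Q → Prop
  Q0 : Set Q
  lab : E → Option A

namespace LFSA

variable {Q Q1 Q2 E A : Type*}

/-- A run `q →s q'` over a finite event sequence. -/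
inductive Run (S : LFSA Q E A) : Q → List E → Q → Prop
  | nil (q : Q) : Run S q [] q
  | cons {q q' q'' : Q} {e : E} {s : List E} :
      S.δ q e q' → Run S q' s q'' → Run S q (e :: s) q''

/-- Output (label sequence) of an event sequence. -/
def out (S : LFSA Q E A) (s : List E) : List A := s.filterMap S.lab

/-- Generated finite language. -/
def L (S : LFSA Q E A) : Set (List E) := {s | ∃ q0 ∈ S.Q0, ∃ q, S.Run q0 s q}

/-- Current-state estimate after observing `σ`. -/
def M (S : LFSA Q E A) (σ : List A) : Set Q :=
  {q | ∃ q0 ∈ S.Q0, ∃ s : List E, S.out s = σ ∧ S.Run q0 s q}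

/-- Reachability via a nonempty event sequence. -/
def ReachPlus (S : LFSA Q E A) (q q' : Q) : Prop := ∃ s : List E, s ≠ [] ∧ S.Run q s q'

/-- There is a transition cycle reachable from `q` (a cycle at `q` itself counts). -/
def CycleReachableFrom (S : LFSA Q E A) (q : Q) : Prop :=
  ∃ p : Q, (p = q ∨ S.ReachPlus q p) ∧ ∃ s : List E, s ≠ [] ∧ S.Run p s p

/-- `*`-strong detectability. -/
def StarSD (S : LFSA Q E A) : Prop :=
  ∃ k : ℕ, 0 < k ∧ ∀ s ∈ S.L, ∀ σ : List A, σ <+: S.out s → k < σ.length →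
    ∃ q : Q, S.M σ = {q}

/-- ω-strong detectability. -/
def OmegaSD (S : LFSA Q E A) : Prop :=
  ∃ k : ℕ, 0 < k ∧ ∀ (s : ℕ → E) (ρ : ℕ → Q), ρ 0 ∈ S.Q0 →
    (∀ n : ℕ, S.δ (ρ n) (s n) (ρ (n + 1))) →
    ∀ (n : ℕ) (σ : List A), σ <+: S.out (List.ofFn (fun i : Fin n => s i)) →
      k < σ.length → ∃ q : Q, S.M σ = {q}

/-- Concurrent composition: observable transitions with equal labels synchronize,
unobservable transitions interleave. Events are pairs over `Option E` (`none` = ε). -/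
def CC (S1 : LFSA Q1 E A) (S2 : LFSA Q2 E A) :
    LFSA (Q1 × Q2) (Option E × Option E) A where
  δ p ev p' :=
    match ev with
    | (some e, some e') =>
        (∃ a : A, S1.lab e = some a ∧ S2.lab e' = some a) ∧
          S1.δ p.1 e p'.1 ∧ S2.δ p.2 e' p'.2
    | (some e, none) => S1.lab e = none ∧ S1.δ p.1 e p'.1 ∧ p.2 = p'.2
    | (none, some e') => S2.lab e' = none ∧ p.1 = p'.1 ∧ S2.δ p.2 e' p'.2
    | (none, none) => False
  Q0 := {p | p.1 ∈ S1.Q0 ∧ p.2 ∈ S2.Q0}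
  lab ev := ev.1.bind S1.lab

/-- Left projection of an event sequence of a concurrent composition. -/
def lproj (s : List (Option E × Option E)) : List E := s.filterMap Prod.fst

/-- Right projection of an event sequence of a concurrent composition. -/
def rproj (s : List (Option E × Option E)) : List E := s.filterMap Prod.snd

/-- Unobservable reach of a set of states. -/
def UR (S : LFSA Q E A) (X : Set Q) : Set Q :=
  {q | ∃ q0 ∈ X, ∃ s : List E, S.out s = [] ∧ S.Run q0 s q}

/-- One step of the observer (powerset construction). -/
def obsStep (S : LFSA Q E A) (x : Set Q) (a : A) : Set Q :=
  {q' | ∃ q ∈ x, ∃ (e : E) (p : Q), S.lab e = some a ∧ S.δ q e p ∧ q' ∈ S.UR {p}}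

/-- Observer run (deterministic). -/
def obsRun (S : LFSA Q E A) (x : Set Q) (σ : List A) : Set Q := σ.foldl S.obsStep x

/-- The concurrent composition `CC(S_ε, Obs^ε)` of `S` (with events relabeled by their
labels) and a deterministic observer with step function `ostep` and initial state `x0`:
observable transitions move both components, unobservable ones move only the left one. -/
def CCObs (S : LFSA Q E A) (ostep : Set Q → A → Set Q) (x0 : Set Q) :
    LFSA (Q × Set Q) E A where
  δ p e p' := S.δ p.1 e p'.1 ∧
    (∀ a : A, S.lab e = some a → p'.2 = ostep p.2 a) ∧
    (S.lab e = none → p'.2 = p.2)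
  Q0 := {p | p.1 ∈ S.Q0 ∧ p.2 = x0}
  lab := S.lab

/-- A state is reachable if it is an initial state or reachable from one. -/
def Reachable (S : LFSA Q E A) (q : Q) : Prop := ∃ q0 ∈ S.Q0, ∃ s : List E, S.Run q0 s q

/-- Restriction of an automaton to a set of allowed states. -/
def restrict (S : LFSA Q E A) (P : Set Q) : LFSA Q E A where
  δ q e q' := S.δ q e q' ∧ q ∈ P ∧ q' ∈ P
  Q0 := S.Q0 ∩ P
  lab := S.lab

/-- A run all of whose states (including endpoints) lie in `P`. -/
inductive RunIn (S : LFSA Q E A) (P : Set Q) : Q → List E → Q → Prop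
  | nil (q : Q) : q ∈ P → RunIn S P q [] q
  | cons {q q' q'' : Q} {e : E} {s : List E} :
      q ∈ P → S.δ q e q' → RunIn S P q' s q'' → RunIn S P q (e :: s) q''

/-- Normal subautomaton: all faulty transitions removed. -/
def Sn (S : LFSA Q E A) (Ef : Set E) : LFSA Q E A where
  δ q e q' := S.δ q e q' ∧ e ∉ Ef
  Q0 := S.Q0
  lab := S.lab

/-- Faulty subautomaton: faulty transitions together with all their
predecessor and successor transitions. -/
def Sf (S : LFSA Q E A) (Ef : Set E) : LFSA Q E A where
  δ q e q' := S.δ q e q' ∧ ∃ c f d, f ∈ Ef ∧ S.δ c f d ∧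
      ((q = c ∧ e = f ∧ q' = d) ∨ (c = q' ∨ S.ReachPlus q' c) ∨ (q = d ∨ S.ReachPlus d q))
  Q0 := S.Q0
  lab := S.lab

/-- `s` ends with a faulty event. -/
def EndsFaulty (Ef : Set E) (s : List E) : Prop := ∃ (t : List E) (e : E), e ∈ Ef ∧ s = t ++ [e]

/-- `E_f`-diagnosability. -/
def Diag (S : LFSA Q E A) (Ef : Set E) : Prop :=
  ∃ k : ℕ, ∀ s ∈ S.L, EndsFaulty Ef s → ∀ s' : List E, s ++ s' ∈ S.L → k < s'.length →
    ∀ s'' ∈ S.L, S.out s'' = S.out (s ++ s') → ∃ e ∈ Ef, e ∈ s''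

/-- `E_f`-predictability. -/
def Pred (S : LFSA Q E A) (Ef : Set E) : Prop :=
  ∃ k : ℕ, ∀ s ∈ S.L, EndsFaulty Ef s →
    ∃ s' : List E, s' <+: s ∧ (∀ e ∈ s', e ∉ Ef) ∧
      ∀ u v : List E, u ++ v ∈ S.L → S.out s' = S.out u → (∀ e ∈ u, e ∉ Ef) →
        k < v.length → ∃ e ∈ Ef, e ∈ v

/-- Current-state opacity. -/
def CSO (S : LFSA Q E A) (QS : Set Q) : Prop :=
  ∀ q0 ∈ S.Q0, ∀ (s : List E) (q : Q), S.Run q0 s q → q ∈ QS →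
    ∃ q0' ∈ S.Q0, ∃ (s' : List E) (q' : Q), S.Run q0' s' q' ∧ q' ∉ QS ∧ S.out s = S.out s'

/-- Initial-state opacity. -/
def ISO (S : LFSA Q E A) (QS : Set Q) : Prop :=
  ∀ q0 ∈ S.Q0 ∩ QS, ∀ (s : List E) (q : Q), S.Run q0 s q →
    ∃ q0' ∈ S.Q0 \ QS, ∃ (s' : List E) (q' : Q), S.Run q0' s' q' ∧ S.out s = S.out s'

/-- Infinite-step opacity. -/
def InfSO (S : LFSA Q E A) (QS : Set Q) : Prop :=
  ∀ q0 ∈ S.Q0, ∀ (s1 : List E) (q1 : Q) (s2 : List E) (q2 : Q),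
    S.Run q0 s1 q1 → S.Run q1 s2 q2 → q1 ∈ QS →
    ∃ q0' ∈ S.Q0, ∃ (s1' : List E) (q1' : Q) (s2' : List E) (q2' : Q),
      S.Run q0' s1' q1' ∧ S.Run q1' s2' q2' ∧ q1' ∉ QS ∧
        S.out s1 = S.out s1' ∧ S.out s2 = S.out s2'

/-- `K`-step opacity. -/
def KSO (S : LFSA Q E A) (QS : Set Q) (K : ℕ) : Prop :=
  ∀ q0 ∈ S.Q0, ∀ (s1 : List E) (q1 : Q) (s2 : List E) (q2 : Q),
    S.Run q0 s1 q1 → S.Run q1 s2 q2 → q1 ∈ QS → (S.out s2).length ≤ K →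
    ∃ q0' ∈ S.Q0, ∃ (s1' : List E) (q1' : Q) (s2' : List E) (q2' : Q),
      S.Run q0' s1' q1' ∧ S.Run q1' s2' q2' ∧ q1' ∉ QS ∧
        S.out s1 = S.out s1' ∧ S.out s2 = S.out s2'

/-- Strong current-state opacity: the matching run is entirely non-secret. -/
def SCSO (S : LFSA Q E A) (QS : Set Q) : Prop :=
  ∀ q0 ∈ S.Q0, ∀ (s : List E) (q : Q), S.Run q0 s q → q ∈ QS →
    ∃ q0' ∈ S.Q0, ∃ (s' : List E) (q' : Q), S.RunIn QSᶜ q0' s' q' ∧ S.out s = S.out s'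

/-- Strong initial-state opacity. -/
def SISO (S : LFSA Q E A) (QS : Set Q) : Prop :=
  ∀ q0 ∈ S.Q0 ∩ QS, ∀ (s : List E) (q : Q), S.Run q0 s q →
    ∃ q0' ∈ S.Q0 \ QS, ∃ (s' : List E) (q' : Q), S.RunIn QSᶜ q0' s' q' ∧ S.out s = S.out s'

/-- Strong infinite-step opacity. -/
def SInfSO (S : LFSA Q E A) (QS : Set Q) : Prop :=
  ∀ q0 ∈ S.Q0, ∀ (s1 : List E) (q1 : Q) (s2 : List E) (q2 : Q),
    S.Run q0 s1 q1 → S.Run q1 s2 q2 → q1 ∈ QS →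
    ∃ q0' ∈ S.Q0, ∃ (s1' : List E) (q1' : Q) (s2' : List E) (q2' : Q),
      S.RunIn QSᶜ q0' s1' q1' ∧ S.RunIn QSᶜ q1' s2' q2' ∧
        S.out s1 = S.out s1' ∧ S.out s2 = S.out s2'

/-- Strong `K`-step opacity. -/
def SKSO (S : LFSA Q E A) (QS : Set Q) (K : ℕ) : Prop :=
  ∀ q0 ∈ S.Q0, ∀ (s1 : List E) (q1 : Q) (s2 : List E) (q2 : Q),
    S.Run q0 s1 q1 → S.Run q1 s2 q2 → q1 ∈ QS → (S.out s2).length ≤ K →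
    ∃ q0' ∈ S.Q0, ∃ (s1' : List E) (q1' : Q) (s2' : List E) (q2' : Q),
      S.RunIn QSᶜ q0' s1' q1' ∧ S.RunIn QSᶜ q1' s2' q2' ∧
        S.out s1 = S.out s1' ∧ S.out s2 = S.out s2'

/-- Observer step of the secret-deleted subautomaton `S_dss`. -/
def dssObsStep (S : LFSA Q E A) (QS : Set Q) : Set Q → A → Set Q :=
  (S.restrict QSᶜ).obsStep

/-- Initial observer state of the secret-deleted subautomaton. -/
def dssInit (S : LFSA Q E A) (QS : Set Q) : Set Q :=
  (S.restrict QSᶜ).UR (S.restrict QSᶜ).Q0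

end LFSA

/-!
Whether a secret state reached by `s₁` is masked over a continuation observed as `σ` depends on
`σ` only through the set `producers σ` of states from which some run emits `σ`. If `producers σ`
is nonempty, so are the `|σ| + 1` sets `producers (σ.drop i)`; when `|σ| > 2^|Q| - 2` two of them
coincide by pigeonhole, and cutting out the observations between them gives a shorter `σ'` with
the same producers. Hence `(2^|Q| - 2)`-step opacity already implies infinite-step opacity.
-/

namespace LFSA

variable {Q E A : Type*} {S : LFSA Q E A}

theorem Run.append {q p r : Q} {u v : List E} (hu : S.Run q u p) (hv : S.Run p v r) :
    S.Run q (u ++ v) r := by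
  induction hu with
  | nil => exact hv
  | cons hδ _ ih => exact .cons hδ (ih hv)

theorem run_append_iff {q r : Q} {u v : List E} :
    S.Run q (u ++ v) r ↔ ∃ p, S.Run q u p ∧ S.Run p v r := by
  refine ⟨fun h => ?_, fun ⟨_, hu, hv⟩ => hu.append hv⟩
  induction u generalizing q with
  | nil => exact ⟨q, .nil q, h⟩
  | cons e u ih =>
    cases h with
    | cons hδ h =>
      obtain ⟨p, hu, hv⟩ := ih h
      exact ⟨p, .cons hδ hu, hv⟩

theorem out_append (u v : List E) : S.out (u ++ v) = S.out u ++ S.out v :=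
  List.filterMap_append

theorem out_eq_append_iff {s : List E} {α β : List A} :
    S.out s = α ++ β ↔ ∃ u v, s = u ++ v ∧ S.out u = α ∧ S.out v = β :=
  List.filterMap_eq_append_iff

def producers (S : LFSA Q E A) (σ : List A) : Set Q :=
  {q | ∃ s q', S.out s = σ ∧ S.Run q s q'}

theorem mem_producers_append {q : Q} {α β : List A} :
    q ∈ S.producers (α ++ β) ↔
      ∃ s p, S.out s = α ∧ S.Run q s p ∧ p ∈ S.producers β := by
  constructor
  · rintro ⟨s, r, hs, hrun⟩
    obtain ⟨u, v, rfl, hu, hv⟩ := out_eq_append_iff.mp hs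
    obtain ⟨p, hrun_u, hrun_v⟩ := run_append_iff.mp hrun
    exact ⟨u, p, hu, hrun_u, v, r, hv, hrun_v⟩
  · rintro ⟨u, p, hu, hrun_u, v, r, hv, hrun_v⟩
    exact ⟨u ++ v, r, by rw [out_append, hu, hv], hrun_u.append hrun_v⟩

theorem producers_append_congr {α β β' : List A} (h : S.producers β = S.producers β') :
    S.producers (α ++ β) = S.producers (α ++ β') := by
  ext q
  simp only [mem_producers_append, h]

theorem producers_drop_nonempty {σ : List A} (h : (S.producers σ).Nonempty) (i : ℕ) :
    (S.producers (σ.drop i)).Nonempty := by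
  obtain ⟨q, hq⟩ := h
  rw [← List.take_append_drop i σ, mem_producers_append] at hq
  obtain ⟨_, p, _, _, hp⟩ := hq
  exact ⟨p, hp⟩

theorem exists_shorter_producers_eq [Fintype Q] {σ : List A}
    (hne : (S.producers σ).Nonempty) (hlen : 2 ^ Fintype.card Q - 2 < σ.length) :
    ∃ σ', σ'.length < σ.length ∧ S.producers σ' = S.producers σ := by
  classical
  have hcard : (Finset.univ.erase (∅ : Set Q)).card < (Finset.range (σ.length + 1)).card := by
    rw [Finset.card_erase_of_mem (Finset.mem_univ _), Finset.card_univ, Fintype.card_set,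
      Finset.card_range]
    omega
  obtain ⟨i, hi, j, hj, hij, heq⟩ := Finset.exists_ne_map_eq_of_card_lt_of_maps_to hcard
    (f := fun i => S.producers (σ.drop i)) fun i _ =>
      Finset.mem_erase.mpr ⟨(producers_drop_nonempty hne i).ne_empty, Finset.mem_univ _⟩
  wlog hlt : i < j generalizing i j
  · exact this j hj i hi hij.symm heq.symm (hij.symm.lt_of_le (not_lt.mp hlt))
  rw [Finset.mem_range] at hj
  refine ⟨σ.take i ++ σ.drop j, by
    simp only [List.length_append, List.length_take, List.length_drop]; omega, ?_⟩
  conv_rhs => rw [← List.take_append_drop i σ]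
  exact producers_append_congr heq.symm

theorem exists_producers_eq_of_length_le [Fintype Q] {σ : List A}
    (hne : (S.producers σ).Nonempty) :
    ∃ σ', σ'.length ≤ 2 ^ Fintype.card Q - 2 ∧ S.producers σ' = S.producers σ := by
  induction hσ : σ.length using Nat.strong_induction_on generalizing σ with
  | _ n ih =>
    by_cases hle : n ≤ 2 ^ Fintype.card Q - 2
    · exact ⟨σ, hσ ▸ hle, rfl⟩
    · obtain ⟨σ', hlt, heq⟩ := exists_shorter_producers_eq hne (hσ ▸ not_le.mp hle)
      obtain ⟨σ'', hlen, heq'⟩ := ih _ (hσ ▸ hlt) (heq ▸ hne) rfl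
      exact ⟨σ'', hlen, heq'.trans heq⟩

theorem kso_mono {QS : Set Q} {K K' : ℕ} (hK : K' ≤ K) (h : S.KSO QS K) : S.KSO QS K' :=
  fun q0 hq0 s1 q1 s2 q2 hrun1 hrun2 hq1 hlen =>
    h q0 hq0 s1 q1 s2 q2 hrun1 hrun2 hq1 (hlen.trans hK)

theorem InfSO.kso {QS : Set Q} (h : S.InfSO QS) (K : ℕ) : S.KSO QS K :=
  fun q0 hq0 s1 q1 s2 q2 hrun1 hrun2 hq1 _ => h q0 hq0 s1 q1 s2 q2 hrun1 hrun2 hq1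

theorem infSO_of_kso [Fintype Q] {QS : Set Q} (h : S.KSO QS (2 ^ Fintype.card Q - 2)) :
    S.InfSO QS := by
  intro q0 hq0 s1 q1 s2 q2 hrun1 hrun2 hq1
  have hmem : q1 ∈ S.producers (S.out s2) := ⟨s2, q2, rfl, hrun2⟩
  obtain ⟨σ, hlen, heq⟩ := exists_producers_eq_of_length_le ⟨q1, hmem⟩
  obtain ⟨t2, r2, ht2, hrun_t2⟩ := heq ▸ hmem
  obtain ⟨q0', hq0', s1', q1', t2', r2', hrun1', hrun_t2', hq1', hout1, hout2⟩ :=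
    h q0 hq0 s1 q1 t2 r2 hrun1 hrun_t2 hq1 (ht2 ▸ hlen)
  have hmem' : q1' ∈ S.producers σ := ⟨t2', r2', hout2 ▸ ht2, hrun_t2'⟩
  obtain ⟨s2', q2', hout2', hrun2'⟩ := heq ▸ hmem'
  exact ⟨q0', hq0', s1', q1', s2', q2', hrun1', hrun2', hq1', hout1, hout2'.symm⟩

theorem kso_iff_of_le [Fintype Q] {QS : Set Q} {K : ℕ} (hK : 2 ^ Fintype.card Q - 2 ≤ K) :
    S.KSO QS K ↔ S.KSO QS (2 ^ Fintype.card Q - 2) :=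
  ⟨kso_mono hK, fun h => (infSO_of_kso h).kso K⟩

end LFSA

theorem stmt11_general {Q E A : Type*} [Fintype Q] (S : LFSA Q E A) (QS : Set Q)
    (K : ℕ) :
    (S.KSO QS K ↔ S.KSO QS (min K (2 ^ Fintype.card Q - 2))) ∧
    (2 ^ Fintype.card Q - 2 < K →
      (S.KSO QS K ↔ S.KSO QS (2 ^ Fintype.card Q - 2))) := by
  refine ⟨?_, fun hK => LFSA.kso_iff_of_le hK.le⟩
  rcases le_total K (2 ^ Fintype.card Q - 2) with hK | hK
  · rw [min_eq_left hK]
  · rw [min_eq_right hK]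
    exact LFSA.kso_iff_of_le hK

/-- `K`-step opacity is equivalent to `min{K, 2^{|Q|}-2}`-step opacity. -/
theorem stmt11 {Q E A : Type*} [Fintype Q] (S : LFSA Q E A) (QS : Set Q)
    (K : ℕ) (hK : 0 < K) :
    (S.KSO QS K ↔ S.KSO QS (min K (2 ^ Fintype.card Q - 2))) ∧
    (2 ^ Fintype.card Q - 2 < K →
      (S.KSO QS K ↔ S.KSO QS (2 ^ Fintype.card Q - 2))) :=
  stmt11_general S QS K
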